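/- For every natural number K, there are only finitely many bubble trees of total charge K (up to isomorphism). Concretely, encoding rooted weighted trees as the inductive type whose elements consist of a root weight in ℕ together with a finite multiset of subtrees, the set of bubble trees of total charge K is finite. -/

import Mathlib

inductive RTree : Type where
  | node : ℕ → List RTree → RTree

namespace RTree

/-- total charge: sum of all weights in the tree -/
def totalCharge : RTree → ℕ
  | .node w c => w + (c.attach.map fun t => totalCharge t.1).sum
decreasing_by
  have := List.sizeOf_lt_of_mem t.2
  simp only [RTree.node.sizeOf_spec]
  omega

/-- number of vertices -/
def numVertices : RTree → ℕ
  | .node _ c => 1 + (c.attach.map fun t => numVertices t.1).sum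
decreasing_by
  have := List.sizeOf_lt_of_mem t.2
  simp only [RTree.node.sizeOf_spec]
  omega

/-- bubble tree condition -/
inductive IsBubble : RTree → Prop where
  | node (w : ℕ) (c : List RTree)
      (hvert : w ≠ 0 ∨ (2 ≤ c.length ∧ ∀ t ∈ c, 0 < totalCharge t))
      (hc : ∀ t ∈ c, IsBubble t) : IsBubble (.node w c)

mutual
  /-- isomorphism of rooted weighted trees (children regarded as a multiset) -/
  inductive TEquiv : RTree → RTree → Prop where
    | node (w : ℕ) {c₁ c₂ : List RTree} (h : LEquiv c₁ c₂) :
        TEquiv (.node w c₁) (.node w c₂)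

  /-- permutation of lists of trees up to `TEquiv` -/
  inductive LEquiv : List RTree → List RTree → Prop where
    | nil : LEquiv [] []
    | cons {t₁ t₂ : RTree} {l₁ l₂ : List RTree} (h : TEquiv t₁ t₂) (hl : LEquiv l₁ l₂) :
        LEquiv (t₁ :: l₁) (t₂ :: l₂)
    | swap (t₁ t₂ : RTree) (l : List RTree) : LEquiv (t₁ :: t₂ :: l) (t₂ :: t₁ :: l)
    | trans {l₁ l₂ l₃ : List RTree} (h₁ : LEquiv l₁ l₂) (h₂ : LEquiv l₂ l₃) : LEquiv l₁ l₃
end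

end RTree

/-! A weight-zero vertex of a bubble tree has at least two children, so by induction a bubble tree
with `N` vertices and total charge `W` satisfies `N + 1 ≤ 2 W`. Trees of bounded charge and
bounded number of vertices are finitely many, by induction on the vertex bound: the root weight
is bounded and the children form a list of bounded length of smaller such trees. -/

theorem Set.Finite.finite_lists_length_le {α : Type*} {s : Set α} (hs : s.Finite) (n : ℕ) :
    {l : List α | l.length ≤ n ∧ ∀ x ∈ l, x ∈ s}.Finite := by
  have : Finite s := hs.to_subtype
  refine ((List.finite_length_le s n).image (List.map Subtype.val)).subset ?_
  rintro l ⟨hlen, hmem⟩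
  exact ⟨l.attachWith (· ∈ s) hmem, by simpa using hlen, by simp⟩

theorem List.sum_map_add_length_le_two_mul {α : Type*} (c : List α) {f g : α → ℕ}
    (h : ∀ t ∈ c, f t + 1 ≤ 2 * g t) :
    (c.map f).sum + c.length ≤ 2 * (c.map g).sum :=
  calc (c.map f).sum + c.length = (c.map fun t => f t + 1).sum := by simp [List.sum_map_add]
    _ ≤ (c.map fun t => 2 * g t).sum := List.sum_le_sum h
    _ = 2 * (c.map g).sum := by simp [List.sum_map_mul_left]

namespace RTree

theorem totalCharge_node (w : ℕ) (c : List RTree) :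
    totalCharge (.node w c) = w + (c.map totalCharge).sum := by
  rw [totalCharge, List.attach_map_val]

theorem numVertices_node (w : ℕ) (c : List RTree) :
    numVertices (.node w c) = 1 + (c.map numVertices).sum := by
  rw [numVertices, List.attach_map_val]

theorem one_le_numVertices : ∀ T : RTree, 1 ≤ numVertices T
  | .node w c => by rw [numVertices_node]; omega

theorem totalCharge_le_of_mem {t : RTree} {c : List RTree} (w : ℕ) (ht : t ∈ c) :
    totalCharge t ≤ totalCharge (.node w c) := by
  rw [totalCharge_node]
  have := List.le_sum_of_mem (List.mem_map_of_mem (f := totalCharge) ht)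
  omega

theorem numVertices_lt_of_mem {t : RTree} {c : List RTree} (w : ℕ) (ht : t ∈ c) :
    numVertices t < numVertices (.node w c) := by
  rw [numVertices_node]
  have := List.le_sum_of_mem (List.mem_map_of_mem (f := numVertices) ht)
  omega

theorem length_lt_numVertices (w : ℕ) (c : List RTree) :
    c.length < numVertices (.node w c) := by
  rw [numVertices_node]
  have := List.length_le_sum_of_one_le (c.map numVertices) (by
    simp only [List.mem_map]
    rintro _ ⟨t, -, rfl⟩
    exact one_le_numVertices t)
  simp only [List.length_map] at this
  omega

theorem numVertices_add_one_le_two_mul_totalCharge {T : RTree} (hT : IsBubble T) :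
    numVertices T + 1 ≤ 2 * totalCharge T := by
  induction hT with
  | node w c hvert _ ih =>
    rw [numVertices_node, totalCharge_node]
    have hchildren := c.sum_map_add_length_le_two_mul ih
    rcases hvert with hw | ⟨hlen, -⟩ <;> omega

theorem finite_setOf_totalCharge_le_numVertices_le (K : ℕ) :
    ∀ n, {T : RTree | totalCharge T ≤ K ∧ numVertices T ≤ n}.Finite
  | 0 => Set.finite_empty.subset fun T ⟨_, hn⟩ => Nat.not_succ_le_zero 0 ((one_le_numVertices T).trans hn)
  | n + 1 => by
    have hchildren := (finite_setOf_totalCharge_le_numVertices_le K n).finite_lists_length_le n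
    refine (((Set.finite_Iic K).prod hchildren).image fun p => node p.1 p.2).subset ?_
    rintro ⟨w, c⟩ ⟨hK, hn⟩
    have hw : w ≤ K := by rw [totalCharge_node] at hK; omega
    have hlen := length_lt_numVertices w c
    refine ⟨(w, c), ⟨hw, show c.length ≤ n by omega, fun t (ht : t ∈ c) => ⟨?_, ?_⟩⟩, rfl⟩
    · exact (totalCharge_le_of_mem w ht).trans hK
    · have := numVertices_lt_of_mem w ht
      omega

theorem finite_setOf_isBubble_totalCharge_eq (K : ℕ) :
    {T : RTree | IsBubble T ∧ totalCharge T = K}.Finite :=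
  (finite_setOf_totalCharge_le_numVertices_le K (2 * K)).subset fun T ⟨hT, hK⟩ => by
    have := numVertices_add_one_le_two_mul_totalCharge hT
    exact ⟨hK.le, by omega⟩

end RTree

theorem finitely_many_bubble_trees (K : ℕ) :
    {q : Quot RTree.TEquiv |
      ∃ T : RTree, RTree.IsBubble T ∧ RTree.totalCharge T = K ∧ Quot.mk RTree.TEquiv T = q}.Finite := by
  refine ((RTree.finite_setOf_isBubble_totalCharge_eq K).image (Quot.mk RTree.TEquiv)).subset ?_
  rintro _ ⟨T, hT, hK, rfl⟩
  exact ⟨T, ⟨hT, hK⟩, rfl⟩
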